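/- Let T be an expandable tree (γ_T > 1) and let 𝒯 ⊆ {0,1}^T be a tree-shift. Then the entropy h(𝒯) is positive if and only if the surface entropy h^{(S)}(𝒯) is positive. -/

import Mathlib

open Filter

/-- A (rooted, locally finite) tree realized as a set of finite words over the
`d` generators: it contains the root (the empty word) and is closed under prefixes. -/
def IsTree {d : ℕ} (T : Set (List (Fin d))) : Prop :=
  ([] : List (Fin d)) ∈ T ∧ ∀ w ∈ T, ∀ u : List (Fin d), u <+: w → u ∈ T

/-- `T_n`: the set of vertices of `T` at distance `n` from the root. -/
def level {d : ℕ} (T : Set (List (Fin d))) (n : ℕ) : Set (List (Fin d)) :=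
  {w ∈ T | w.length = n}

/-- `Δ_n = ∪_{i=0}^n T_i`: the set of vertices of `T` at distance at most `n`. -/
def ball {d : ℕ} (T : Set (List (Fin d))) (n : ℕ) : Set (List (Fin d)) :=
  {w ∈ T | w.length ≤ n}

/-- The statement that the expanding number `γ_T = lim_n |T_{n+1}|/|T_n|` exists
and equals `γ`. -/
def HasExpandingNumber {d : ℕ} (T : Set (List (Fin d))) (γ : ℝ) : Prop :=
  Tendsto (fun n : ℕ => ((level T (n + 1)).ncard : ℝ) / ((level T n).ncard : ℝ)) atTop (nhds γ)

/-- `|P(Δ_n, 𝒯)|`: the number of restrictions of labeled trees of `𝒯` to `Δ_n`. -/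
noncomputable def ballBlockCount {d : ℕ} {A : Type*} (T : Set (List (Fin d)))
    (𝒯 : Set (List (Fin d) → A)) (n : ℕ) : ℕ :=
  Set.ncard ((fun t (w : ball T n) => t (w : List (Fin d))) '' 𝒯)

/-- The entropy of a tree-shift, `h(𝒯) = limsup_n log |P(Δ_n,𝒯)| / |Δ_n|`. -/
noncomputable def treeEntropy {d : ℕ} {A : Type*} (T : Set (List (Fin d)))
    (𝒯 : Set (List (Fin d) → A)) : ℝ :=
  limsup (fun n : ℕ => Real.log (ballBlockCount T 𝒯 n) / ((ball T n).ncard : ℝ)) atTop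

/-- `S` is an independence set for `𝒯`: every assignment of symbols on `S`
extends to an element of `𝒯`. -/
def IsIndepSet {I A : Type*} (𝒯 : Set (I → A)) (S : Set I) : Prop :=
  ∀ u : I → A, ∃ t ∈ 𝒯, ∀ w ∈ S, t w = u w

/-- `𝒯` is a tree-shift on `T`: the set of labelings of `T` avoiding every pattern
from some set `F` of forbidden finite patterns (a pattern is a finitely supported
partial labeling; it appears in `t` at a vertex `g ∈ T` if every cell of the pattern,
translated to sit below `g`, lies in `T` and carries the prescribed label). -/
def IsTreeShift {d : ℕ} {A : Type*} (T : Set (List (Fin d)))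
    (𝒯 : Set (List (Fin d) → A)) : Prop :=
  ∃ F : Set (List (Fin d) → Option A),
    (∀ p ∈ F, {w | p w ≠ none}.Finite) ∧
    𝒯 = {t | ∀ p ∈ F, ∀ g ∈ T,
          ¬ ∀ w : List (Fin d), ∀ a : A, p w = some a → g ++ w ∈ T ∧ t (g ++ w) = a}

/-- `|B_n^{(S)}(𝒯)|`: the number of restrictions of labeled trees of `𝒯` to `T_n`. -/
noncomputable def levelBlockCount {d : ℕ} {A : Type*} (T : Set (List (Fin d)))
    (𝒯 : Set (List (Fin d) → A)) (n : ℕ) : ℕ :=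
  Set.ncard ((fun t (w : level T n) => t (w : List (Fin d))) '' 𝒯)

/-- The surface entropy of a tree-shift,
`h^{(S)}(𝒯) = limsup_n log |B_n^{(S)}(𝒯)| / |T_n|`. -/
noncomputable def surfaceEntropy {d : ℕ} {A : Type*} (T : Set (List (Fin d)))
    (𝒯 : Set (List (Fin d) → A)) : ℝ :=
  limsup (fun n : ℕ => Real.log (levelBlockCount T 𝒯 n) / ((level T n).ncard : ℝ)) atTop

/-! Restricting to `Δ_{n+1} = Δ_n ∪ T_{n+1}` gives `|P(Δ_{n+1})| ≤ |P(Δ_n)| · |B_{n+1}|`, so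
`log |P(Δ_n)| ≤ ∑_{i ≤ n} log |B_i|`, and a weighted Cesàro argument yields `h ≤ h^{(S)}`.
Conversely `|B_n| ≤ |P(Δ_n)|`, and since `|T_{n+1}| / |T_n| → γ > 1` the ball `Δ_n` is
eventually at most a fixed multiple `M` of the sphere `T_n`, whence `h^{(S)} ≤ M h`. -/

open Finset

theorem Real.log_natCast_le_log_natCast {m n : ℕ} (h : m ≤ n) : Real.log m ≤ Real.log n := by
  rcases m.eq_zero_or_pos with rfl | hm
  · simpa using Real.log_natCast_nonneg n
  · exact Real.log_le_log (by exact_mod_cast hm) (by exact_mod_cast h)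

theorem Real.log_natCast_le_log_add_log {m k l : ℕ} (h : m ≤ k * l) :
    Real.log m ≤ Real.log k + Real.log l := by
  rcases m.eq_zero_or_pos with rfl | hm
  · simpa using add_nonneg (Real.log_natCast_nonneg k) (Real.log_natCast_nonneg l)
  · have hkl : 0 < k * l := hm.trans_le h
    rw [← Real.log_mul (by exact_mod_cast (Nat.pos_of_mul_pos_right hkl).ne')
      (by exact_mod_cast (Nat.pos_of_mul_pos_left hkl).ne'), ← Nat.cast_mul]
    exact Real.log_natCast_le_log_natCast h

section BlockCount

variable {I A : Type*}

/-- `ballBlockCount T 𝒯 n` and `levelBlockCount T 𝒯 n` are, by definition,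
`blockCount 𝒯 (ball T n)` and `blockCount 𝒯 (level T n)`. -/
noncomputable def blockCount (𝒯 : Set (I → A)) (S : Set I) : ℕ :=
  ((fun t (w : S) => t w) '' 𝒯).ncard

variable {𝒯 : Set (I → A)} [Finite A] {S S' : Set I}

theorem blockCount_le_pow (hS : S.Finite) : blockCount 𝒯 S ≤ Nat.card A ^ S.ncard := by
  have := hS.to_subtype
  calc blockCount 𝒯 S ≤ Nat.card (S → A) := Set.ncard_le_card _
    _ = Nat.card A ^ S.ncard := by rw [Nat.card_fun, Nat.card_coe_set_eq]

theorem blockCount_mono (hS' : S'.Finite) (h : S ⊆ S') : blockCount 𝒯 S ≤ blockCount 𝒯 S' := by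
  have := hS'.to_subtype
  calc blockCount 𝒯 S
      = ((fun u (w : S) => u ⟨w, h w.2⟩) '' ((fun t (w : S') => t w) '' 𝒯)).ncard := by
        rw [Set.image_image]; rfl
    _ ≤ blockCount 𝒯 S' := Set.ncard_image_le (Set.toFinite _)

theorem blockCount_union_le (hS : S.Finite) (hS' : S'.Finite) :
    blockCount 𝒯 (S ∪ S') ≤ blockCount 𝒯 S * blockCount 𝒯 S' := by
  have := hS.to_subtype
  have := hS'.to_subtype
  rw [blockCount, blockCount, blockCount, ← Set.ncard_prod]
  refine Set.ncard_le_ncard_of_injOn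
    (fun u => (fun w : S => u ⟨w, Or.inl w.2⟩, fun w : S' => u ⟨w, Or.inr w.2⟩))
    ?_ ?_ (Set.toFinite _)
  · rintro _ ⟨t, ht, rfl⟩
    exact ⟨⟨t, ht, rfl⟩, ⟨t, ht, rfl⟩⟩
  · intro u _ v _ huv
    funext ⟨w, hw⟩
    rcases hw with hw | hw
    · exact congrFun (congrArg Prod.fst huv) ⟨w, hw⟩
    · exact congrFun (congrArg Prod.snd huv) ⟨w, hw⟩

theorem log_blockCount_div_ncard_le (hS : S.Finite) :
    Real.log (blockCount 𝒯 S) / S.ncard ≤ Real.log (Nat.card A) := by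
  rcases Nat.eq_zero_or_pos S.ncard with h | h
  · rw [h, Nat.cast_zero, div_zero]
    exact Real.log_natCast_nonneg _
  rw [div_le_iff₀ (by exact_mod_cast h), mul_comm, ← Real.log_pow, ← Nat.cast_pow]
  exact Real.log_natCast_le_log_natCast (blockCount_le_pow hS)

theorem isBoundedUnder_log_blockCount_div_ncard {ι : Type*} {l : Filter ι} {S : ι → Set I}
    (hS : ∀ i, (S i).Finite) :
    IsBoundedUnder (· ≤ ·) l fun i => Real.log (blockCount 𝒯 (S i)) / (S i).ncard :=
  isBoundedUnder_of ⟨_, fun i => log_blockCount_div_ncard_le (hS i)⟩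

end BlockCount

theorem exists_sum_range_le_mul_of_tendsto_ratio {a : ℕ → ℝ} (ha : ∀ n, 0 < a n) {γ : ℝ}
    (hγ : Tendsto (fun n => a (n + 1) / a n) atTop (nhds γ)) (hγ1 : 1 < γ) :
    ∃ M > 0, ∀ᶠ n in atTop, ∑ i ∈ range (n + 1), a i ≤ M * a n := by
  obtain ⟨q, hq1, hqγ⟩ := exists_between hγ1
  obtain ⟨N, hN⟩ := eventually_atTop.1 (hγ.eventually (eventually_ge_nhds hqγ))
  set M := max ((∑ i ∈ range (N + 1), a i) / a N) (q / (q - 1))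
  have hqM : q ≤ M * (q - 1) := (div_le_iff₀ (sub_pos.2 hq1)).1 (le_max_right _ _)
  refine ⟨M, (div_pos (zero_lt_one.trans hq1) (sub_pos.2 hq1)).trans_le (le_max_right _ _),
    eventually_atTop.2 ⟨N, fun n hn => ?_⟩⟩
  induction n, hn using Nat.le_induction with
  | base => exact (div_le_iff₀ (ha N)).1 (le_max_left _ _)
  | succ n hn ih =>
    -- `M (q - 1) ≥ q` and `a (n + 1) ≥ q a n` give `M a n + a (n + 1) ≤ M a (n + 1)`.
    have hstep : q * a n ≤ a (n + 1) := (le_div_iff₀ (ha n)).1 (hN n hn)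
    have hM1 : 1 ≤ M := by nlinarith
    rw [sum_range_succ]
    nlinarith [mul_le_mul_of_nonneg_left hstep (sub_nonneg.2 hM1),
      mul_le_mul_of_nonneg_right hqM (ha n).le]

theorem eventually_sum_range_le_mul_sum_range {x w : ℕ → ℝ} {s c : ℝ} (hsc : s < c)
    (hw : Tendsto (fun n => ∑ i ∈ range n, w i) atTop atTop)
    (hx : ∀ᶠ n in atTop, x n ≤ s * w n) :
    ∀ᶠ n in atTop, ∑ i ∈ range n, x i ≤ c * ∑ i ∈ range n, w i := by
  obtain ⟨N, hN⟩ := eventually_atTop.1 hx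
  set C := ∑ i ∈ range N, (x i - s * w i)
  filter_upwards [eventually_ge_atTop N, hw.eventually_ge_atTop (C / (c - s))] with n hn hW
  have htail : ∑ i ∈ Ico N n, (x i - s * w i) ≤ 0 :=
    sum_nonpos fun i hi => sub_nonpos.2 (hN i (mem_Ico.1 hi).1)
  have hhead : ∑ i ∈ range n, x i - s * ∑ i ∈ range n, w i ≤ C := by
    rw [mul_sum, ← sum_sub_distrib, ← sum_range_add_sum_Ico _ hn]
    linarith
  rw [div_le_iff₀ (sub_pos.2 hsc)] at hW
  linarith

section Tree

variable {d : ℕ} {T : Set (List (Fin d))}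

theorem level_finite (T : Set (List (Fin d))) (n : ℕ) : (level T n).Finite :=
  (List.finite_length_eq (Fin d) n).subset fun _ hw => hw.2

theorem ball_finite (T : Set (List (Fin d))) (n : ℕ) : (ball T n).Finite :=
  (List.finite_length_le (Fin d) n).subset fun _ hw => hw.2

theorem level_subset_ball (n : ℕ) : level T n ⊆ ball T n :=
  fun _ hw => ⟨hw.1, hw.2.le⟩

theorem ncard_level_pos {n : ℕ} (h : (level T n).Nonempty) : 0 < (level T n).ncard :=
  h.ncard_pos (level_finite T n)

theorem ncard_ball_pos {n : ℕ} (h : (level T n).Nonempty) : 0 < (ball T n).ncard :=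
  (h.mono (level_subset_ball n)).ncard_pos (ball_finite T n)

theorem ball_zero : ball T 0 = level T 0 := by
  ext w
  simp [ball, level]

theorem ball_succ (n : ℕ) : ball T (n + 1) = ball T n ∪ level T (n + 1) := by
  ext w
  simp only [ball, level, Set.mem_ofPred_eq, Set.mem_union, Nat.le_add_one_iff]
  tauto

theorem natCast_ncard_ball (n : ℕ) :
    ((ball T n).ncard : ℝ) = ∑ i ∈ range (n + 1), ((level T i).ncard : ℝ) := by
  induction n with
  | zero => simp [ball_zero]
  | succ n ih =>
    have hdisj : Disjoint (ball T n) (level T (n + 1)) :=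
      Set.disjoint_left.2 fun _ hw hw' => by have := hw.2; have := hw'.2; omega
    rw [ball_succ, Set.ncard_union_eq hdisj (ball_finite T n) (level_finite T (n + 1)),
      sum_range_succ, ← ih, Nat.cast_add]

theorem IsTree.level_nonempty_of_le (hT : IsTree T) {m n : ℕ} (hmn : m ≤ n)
    (h : (level T n).Nonempty) : (level T m).Nonempty :=
  let ⟨w, hwT, hw⟩ := h
  ⟨w.take m, hT.2 w hwT _ (List.take_prefix m w), by simp [hw, hmn]⟩

theorem IsTree.level_nonempty (hT : IsTree T) {γ : ℝ} (hγ : HasExpandingNumber T γ)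
    (hγ0 : γ ≠ 0) (n : ℕ) : (level T n).Nonempty := by
  by_contra h
  have hzero : ∀ᶠ m in atTop, (0 : ℝ) = ((level T (m + 1)).ncard : ℝ) / (level T m).ncard := by
    filter_upwards [eventually_ge_atTop n] with m hm
    rw [Set.not_nonempty_iff_eq_empty.1 fun h' => h (hT.level_nonempty_of_le hm h')]
    simp
  exact hγ0 (tendsto_nhds_unique hγ (tendsto_const_nhds.congr' hzero))

theorem IsTree.exists_ncard_ball_le_mul_ncard_level (hT : IsTree T) {γ : ℝ}
    (hγ : HasExpandingNumber T γ) (hγ1 : 1 < γ) :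
    ∃ M > 0, ∀ᶠ n in atTop, ((ball T n).ncard : ℝ) ≤ M * (level T n).ncard := by
  simp only [natCast_ncard_ball]
  exact exists_sum_range_le_mul_of_tendsto_ratio
    (fun n => by exact_mod_cast ncard_level_pos (hT.level_nonempty hγ (by linarith) n))
    hγ hγ1

end Tree

section Entropy

variable {d : ℕ} {T : Set (List (Fin d))} {A : Type*} [Finite A] {𝒯 : Set (List (Fin d) → A)}

theorem levelBlockCount_le_ballBlockCount (n : ℕ) :
    levelBlockCount T 𝒯 n ≤ ballBlockCount T 𝒯 n :=
  blockCount_mono (ball_finite T n) (level_subset_ball n)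

theorem log_ballBlockCount_le_sum (n : ℕ) :
    Real.log (ballBlockCount T 𝒯 n) ≤ ∑ i ∈ range (n + 1), Real.log (levelBlockCount T 𝒯 i) := by
  induction n with
  | zero =>
    rw [sum_range_one]
    show Real.log (blockCount 𝒯 (ball T 0)) ≤ Real.log (blockCount 𝒯 (level T 0))
    rw [ball_zero]
  | succ n ih =>
    have hsplit :
        ballBlockCount T 𝒯 (n + 1) ≤ ballBlockCount T 𝒯 n * levelBlockCount T 𝒯 (n + 1) := by
      show blockCount 𝒯 (ball T (n + 1)) ≤ _
      rw [ball_succ]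
      exact blockCount_union_le (ball_finite T n) (level_finite T (n + 1))
    rw [sum_range_succ]
    linarith [Real.log_natCast_le_log_add_log hsplit]

theorem treeEntropy_le_surfaceEntropy (hT : ∀ n, (level T n).Nonempty) :
    treeEntropy T 𝒯 ≤ surfaceEntropy T 𝒯 := by
  have hlevel (n : ℕ) : (1 : ℝ) ≤ (level T n).ncard := by
    exact_mod_cast ncard_level_pos (hT n)
  refine le_of_forall_gt_imp_ge_of_dense fun c hc => ?_
  obtain ⟨s, hs, hsc⟩ := exists_between hc
  have hx : ∀ᶠ n in atTop, Real.log (levelBlockCount T 𝒯 n) ≤ s * (level T n).ncard :=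
    (eventually_lt_of_limsup_lt hs (isBoundedUnder_log_blockCount_div_ncard (level_finite T))).mono
      fun n hn => ((div_lt_iff₀ (zero_lt_one.trans_le (hlevel n))).1 hn).le
  have hw : Tendsto (fun n => ∑ i ∈ range n, ((level T i).ncard : ℝ)) atTop atTop :=
    tendsto_atTop_mono (fun n => by simpa using card_nsmul_le_sum (range n) _ 1 fun i _ => hlevel i)
      tendsto_natCast_atTop_atTop
  have hsum :=
    (tendsto_add_atTop_nat 1).eventually (eventually_sum_range_le_mul_sum_range hsc hw hx)
  refine limsup_le_of_le (isCoboundedUnder_le_of_le atTop fun _ => by positivity)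
    (hsum.mono fun n hn => ?_)
  rw [div_le_iff₀ (by exact_mod_cast ncard_ball_pos (hT n)), natCast_ncard_ball]
  exact (log_ballBlockCount_le_sum n).trans hn

theorem surfaceEntropy_le_mul_treeEntropy (hT : ∀ n, (level T n).Nonempty) {M : ℝ} (hM : 0 ≤ M)
    (hball : ∀ᶠ n in atTop, ((ball T n).ncard : ℝ) ≤ M * (level T n).ncard) :
    surfaceEntropy T 𝒯 ≤ M * treeEntropy T 𝒯 := by
  set a := fun n : ℕ => Real.log (ballBlockCount T 𝒯 n) / (ball T n).ncard
  have ha : IsBoundedUnder (· ≤ ·) atTop a :=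
    isBoundedUnder_log_blockCount_div_ncard (ball_finite T)
  have hM' : ∃ᶠ _ in (atTop : Filter ℕ), 0 ≤ M := Frequently.of_forall fun _ => hM
  have ha0 : 0 ≤ᶠ[atTop] a := Eventually.of_forall fun _ => by positivity
  calc surfaceEntropy T 𝒯 ≤ limsup ((fun _ => M) * a) atTop := by
        refine limsup_le_limsup (hball.mono fun n hn => ?_)
          (isCoboundedUnder_le_of_le atTop fun _ => by positivity)
          (isBoundedUnder_le_mul_of_nonneg hM' isBoundedUnder_const ha0 ha)
        have hball : (0 : ℝ) < (ball T n).ncard := by exact_mod_cast ncard_ball_pos (hT n)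
        show _ ≤ M * a n
        rw [div_le_iff₀ (by exact_mod_cast ncard_level_pos (hT n))]
        calc Real.log (levelBlockCount T 𝒯 n)
            ≤ Real.log (ballBlockCount T 𝒯 n) :=
              Real.log_natCast_le_log_natCast (levelBlockCount_le_ballBlockCount n)
          _ = a n * (ball T n).ncard := (div_mul_cancel₀ _ hball.ne').symm
          _ ≤ a n * (M * (level T n).ncard) := mul_le_mul_of_nonneg_left hn (by positivity)
          _ = M * a n * (level T n).ncard := by ring
    _ ≤ limsup (fun _ => M) atTop * treeEntropy T 𝒯 :=
        limsup_mul_le hM' isBoundedUnder_const ha0 ha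
    _ = M * treeEntropy T 𝒯 := by rw [limsup_const]

end Entropy

theorem pos_entropy_iff_pos_surfaceEntropy_general
    (d : ℕ) (T : Set (List (Fin d))) (hT : IsTree T)
    (γ : ℝ) (hγ : HasExpandingNumber T γ) (hγ1 : 1 < γ)
    (𝒯 : Set (List (Fin d) → Bool)) :
    0 < treeEntropy T 𝒯 ↔ 0 < surfaceEntropy T 𝒯 := by
  have hlevel := hT.level_nonempty hγ (by linarith)
  obtain ⟨M, hM, hball⟩ := hT.exists_ncard_ball_le_mul_ncard_level hγ hγ1
  have h₁ : treeEntropy T 𝒯 ≤ surfaceEntropy T 𝒯 := treeEntropy_le_surfaceEntropy hlevel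
  have h₂ : surfaceEntropy T 𝒯 ≤ M * treeEntropy T 𝒯 :=
    surfaceEntropy_le_mul_treeEntropy hlevel hM.le hball
  exact ⟨fun h => h.trans_le h₁, fun h => pos_of_mul_pos_right (h.trans_le h₂) hM.le⟩

/-- For a tree-shift `𝒯 ⊆ {0,1}^T` on an expandable tree
(`γ_T > 1`), the entropy is positive iff the surface entropy is positive. -/
theorem pos_entropy_iff_pos_surfaceEntropy
    (d : ℕ) (T : Set (List (Fin d))) (hT : IsTree T)
    (γ : ℝ) (hγ : HasExpandingNumber T γ) (hγ1 : 1 < γ)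
    (𝒯 : Set (List (Fin d) → Bool)) (h𝒯 : IsTreeShift T 𝒯) :
    0 < treeEntropy T 𝒯 ↔ 0 < surfaceEntropy T 𝒯 :=
  pos_entropy_iff_pos_surfaceEntropy_general d T hT γ hγ hγ1 𝒯
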